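/- arXiv:1903.05985 — 3 statements merged into one kernel-verified Lean document; each statement's English description precedes it below -/
import Mathlib

section
/- Let d, m ∈ ℕ, T, C₁, C₂ ≥ 0, let μ : [0,T] × ℝ^d → ℝ^d and σ : [0,T] × ℝ^d → ℝ^{d×m} satisfy max{⟨x, μ(t,x)⟩, ‖σ(t,x)‖_F²} ≤ C₁ + C₂‖x‖² for all t, x, and for p ∈ [2,∞) let V_p(x) = (1 + ‖x‖²)^{p/2}. Then V_p is smooth and for all t ∈ [0,T], x ∈ ℝ^d, p ∈ [2,∞): (1/2)·Trace(σ(t,x)σ(t,x)* Hess V_p(x)) + ⟨μ(t,x), ∇V_p(x)⟩ ≤ (p(p+1)/2)·((p-2)/p + C₂)·V_p(x) + (p+1)·C₁^{p/2}. -/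
open scoped BigOperators

section Aux

private lemma sq_hasFDerivAt (d : ℕ) (x : Fin d → ℝ) (i : Fin d) :
    HasFDerivAt (fun y : Fin d → ℝ => y i ^ 2)
      ((2 * x i) • (ContinuousLinearMap.proj i : (Fin d → ℝ) →L[ℝ] ℝ)) x := by
  have h := ((ContinuousLinearMap.proj i : (Fin d → ℝ) →L[ℝ] ℝ).hasFDerivAt (x := x)).fun_mul
    ((ContinuousLinearMap.proj i : (Fin d → ℝ) →L[ℝ] ℝ).hasFDerivAt (x := x))
  simp only [ContinuousLinearMap.proj_apply] at h
  simpa [sq, two_mul, add_smul] using h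

private lemma g_hasFDerivAt (d : ℕ) (x : Fin d → ℝ) :
    HasFDerivAt (fun y : Fin d → ℝ => 1 + ∑ i, y i ^ 2)
      (∑ i, (2 * x i) • (ContinuousLinearMap.proj i : (Fin d → ℝ) →L[ℝ] ℝ)) x := by
  have h : HasFDerivAt (fun y : Fin d → ℝ => ∑ i, y i ^ 2)
      (∑ i, (2 * x i) • (ContinuousLinearMap.proj i : (Fin d → ℝ) →L[ℝ] ℝ)) x :=
    HasFDerivAt.fun_sum fun i _ => sq_hasFDerivAt d x i
  simpa using h.const_add 1

private lemma g_pos (d : ℕ) (x : Fin d → ℝ) : (0:ℝ) < 1 + ∑ i, x i ^ 2 := by positivity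

private lemma W_hasFDerivAt (d : ℕ) (q : ℝ) (x : Fin d → ℝ) :
    HasFDerivAt (fun y : Fin d → ℝ => (1 + ∑ i, y i ^ 2) ^ q)
      ((q * (1 + ∑ i, x i ^ 2) ^ (q - 1)) •
        ∑ i, (2 * x i) • (ContinuousLinearMap.proj i : (Fin d → ℝ) →L[ℝ] ℝ)) x :=
  (g_hasFDerivAt d x).rpow_const (Or.inl (g_pos d x).ne')

private lemma W_fderiv_apply (d : ℕ) (q : ℝ) (x : Fin d → ℝ) (j : Fin d) :
    fderiv ℝ (fun y : Fin d → ℝ => (1 + ∑ i, y i ^ 2) ^ q) x (Pi.single j 1)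
      = 2 * q * x j * (1 + ∑ i, x i ^ 2) ^ (q - 1) := by
  rw [(W_hasFDerivAt d q x).fderiv]
  simp [ContinuousLinearMap.sum_apply, Pi.single_apply, mul_ite, Finset.sum_ite_eq]
  ring

private lemma W_second_apply (d : ℕ) (q : ℝ) (x : Fin d → ℝ) (i j : Fin d) :
    fderiv ℝ (fun y : Fin d → ℝ =>
        fderiv ℝ (fun z : Fin d → ℝ => (1 + ∑ i, z i ^ 2) ^ q) y (Pi.single j 1)) x
        (Pi.single i 1)
      = 2 * q * (1 + ∑ i, x i ^ 2) ^ (q - 1) * (if i = j then 1 else 0)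
        + 4 * q * (q - 1) * (1 + ∑ i, x i ^ 2) ^ (q - 2) * x i * x j := by
  have hfun : (fun y : Fin d → ℝ =>
      fderiv ℝ (fun z : Fin d → ℝ => (1 + ∑ i, z i ^ 2) ^ q) y (Pi.single j 1))
      = fun y : Fin d → ℝ => (2 * q * y j) * (1 + ∑ i, y i ^ 2) ^ (q - 1) := by
    funext y
    rw [W_fderiv_apply d q y j]
  rw [hfun]
  have h1 : HasFDerivAt (fun y : Fin d → ℝ => (1 + ∑ i, y i ^ 2) ^ (q - 1))
      (((q - 1) * (1 + ∑ i, x i ^ 2) ^ (q - 1 - 1)) •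
        ∑ i, (2 * x i) • (ContinuousLinearMap.proj i : (Fin d → ℝ) →L[ℝ] ℝ)) x :=
    (g_hasFDerivAt d x).rpow_const (Or.inl (g_pos d x).ne')
  have h2 : HasFDerivAt (fun y : Fin d → ℝ => 2 * q * y j)
      ((2 * q) • (ContinuousLinearMap.proj j : (Fin d → ℝ) →L[ℝ] ℝ)) x :=
    ((ContinuousLinearMap.proj j : (Fin d → ℝ) →L[ℝ] ℝ).hasFDerivAt (x := x)).const_mul (2 * q)
  have h3 := h2.fun_mul h1
  rw [h3.fderiv]
  have e : q - 1 - 1 = q - 2 := by ring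
  rw [e]
  simp [ContinuousLinearMap.sum_apply, Pi.single_apply, mul_ite, Finset.sum_ite_eq]
  by_cases hij : i = j
  · subst hij; simp; ring
  · have hji : ¬ j = i := fun h => hij h.symm
    simp [hij, hji]
    ring

private lemma W_contDiff (d : ℕ) (q : ℝ) :
    ContDiff ℝ (⊤ : ℕ∞) (fun y : Fin d → ℝ => (1 + ∑ i, y i ^ 2) ^ q) := by
  rw [contDiff_iff_contDiffAt]
  intro x
  have hg : ContDiff ℝ (⊤ : ℕ∞) (fun y : Fin d → ℝ => 1 + ∑ i, y i ^ 2) :=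
    contDiff_const.add (ContDiff.sum fun i _ =>
      ((ContinuousLinearMap.proj i : (Fin d → ℝ) →L[ℝ] ℝ).contDiff).pow 2)
  exact hg.contDiffAt.rpow_const_of_ne (g_pos d x).ne'

private lemma alg_ineq (p C1 C2 S Sig Dr QQ : ℝ) (hp2 : 2 ≤ p) (hC1 : 0 ≤ C1) (hC2 : 0 ≤ C2)
    (hS0 : 0 ≤ S) (hSig0 : 0 ≤ Sig) (hSig : Sig ≤ C1 + C2 * S) (hDr : Dr ≤ C1 + C2 * S)
    (hQQ0 : 0 ≤ QQ) (hQQ : QQ ≤ S * Sig) :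
    (1/2) * (p * ((1+S) ^ (p/2-1)) * Sig + p * (p-2) * ((1+S) ^ (p/2-2)) * QQ)
      + p * ((1+S) ^ (p/2-1)) * Dr
    ≤ (p * (p+1) / 2) * ((p-2)/p + C2) * ((1+S) ^ (p/2)) + (p+1) * C1 ^ (p/2) := by
  have hp0 : (0:ℝ) < p := by linarith
  set g : ℝ := 1 + S with hg
  have hgpos : (0:ℝ) < g := by rw [hg]; linarith
  set A : ℝ := g ^ (p/2-1) with hA
  set B : ℝ := g ^ (p/2-2) with hB
  set G : ℝ := g ^ (p/2) with hG
  have hApos : 0 < A := Real.rpow_pos_of_pos hgpos _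
  have hBpos : 0 < B := Real.rpow_pos_of_pos hgpos _
  have hGpos : 0 < G := Real.rpow_pos_of_pos hgpos _
  have hBA : B * g = A := by
    rw [hB, hA, ← Real.rpow_add_one hgpos.ne']
    congr 1; ring
  have hAG : A * g = G := by
    rw [hA, hG, ← Real.rpow_add_one hgpos.ne']
    congr 1; ring
  have hSg : S ≤ g := by rw [hg]; linarith
  have hX0 : 0 ≤ C1 + C2 * S := by positivity
  -- B * QQ ≤ A * Sig
  have h1 : B * QQ ≤ A * Sig := by
    have a1 : B * QQ ≤ B * (S * Sig) := mul_le_mul_of_nonneg_left hQQ hBpos.le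
    have a2 : B * (S * Sig) ≤ B * (g * Sig) := by
      apply mul_le_mul_of_nonneg_left _ hBpos.le
      exact mul_le_mul_of_nonneg_right hSg hSig0
    have a3 : B * (g * Sig) = A * Sig := by rw [← hBA]; ring
    linarith
  -- A * S ≤ G
  have h2 : A * S ≤ G := by
    have := mul_le_mul_of_nonneg_left hSg hApos.le
    linarith [hAG]
  -- Young: C1 * A ≤ (p-2)/p * G + 2/p * C1^(p/2)
  have young : C1 * A ≤ (p-2)/p * G + 2/p * C1 ^ (p/2) := by
    have e1 : G ^ ((p-2)/p) = A := by
      rw [hG, hA, ← Real.rpow_mul hgpos.le]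
      congr 1; field_simp
    have e2 : (C1 ^ (p/2)) ^ ((2:ℝ)/p) = C1 := by
      rw [← Real.rpow_mul hC1, show (p/2) * (2/p) = 1 by field_simp, Real.rpow_one]
    have hw : (p-2)/p + 2/p = 1 := by field_simp; ring
    have := Real.geom_mean_le_arith_mean2_weighted
      (w₁ := (p-2)/p) (w₂ := 2/p) (p₁ := G) (p₂ := C1 ^ (p/2))
      (div_nonneg (by linarith) hp0.le) (div_nonneg (by norm_num) hp0.le)
      hGpos.le (Real.rpow_nonneg hC1 _) hw
    rw [e1, e2] at this
    linarith [this]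
  have hK : (0:ℝ) ≤ p * (p+1) / 2 := by nlinarith [hp0.le, hp2]
  have hcoef : (0:ℝ) ≤ p * (p-2) := mul_nonneg hp0.le (by linarith)
  -- main step 1
  have main1 : (1/2) * (p * A * Sig + p * (p-2) * B * QQ) + p * A * Dr
      ≤ (p * (p+1) / 2) * (A * (C1 + C2 * S)) := by
    have c1 : p * A * Sig ≤ p * A * (C1 + C2 * S) :=
      mul_le_mul_of_nonneg_left hSig (by positivity)
    have c2 : p * A * Dr ≤ p * A * (C1 + C2 * S) :=
      mul_le_mul_of_nonneg_left hDr (by positivity)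
    have c3 : p * (p-2) * (B * QQ) ≤ p * (p-2) * (A * Sig) :=
      mul_le_mul_of_nonneg_left h1 hcoef
    have c4 : p * (p-2) * (A * Sig) ≤ p * (p-2) * (A * (C1 + C2 * S)) :=
      mul_le_mul_of_nonneg_left (mul_le_mul_of_nonneg_left hSig hApos.le) hcoef
    linarith [c1, c2, c3, c4]
  -- main step 2
  have main2 : (p * (p+1) / 2) * (A * (C1 + C2 * S))
      ≤ (p * (p+1) / 2) * ((p-2)/p + C2) * G + (p+1) * C1 ^ (p/2) := by
    have h2' : C2 * (A * S) ≤ C2 * G := mul_le_mul_of_nonneg_left h2 hC2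
    have h3 : A * (C1 + C2 * S) ≤ C1 * A + C2 * G := by linarith [h2']
    have h4 : C1 * A + C2 * G ≤ (p-2)/p * G + 2/p * C1 ^ (p/2) + C2 * G := by linarith
    have h5 : (p * (p+1) / 2) * (A * (C1 + C2 * S))
        ≤ (p * (p+1) / 2) * ((p-2)/p * G + 2/p * C1 ^ (p/2) + C2 * G) :=
      mul_le_mul_of_nonneg_left (le_trans h3 h4) hK
    have h6 : (p * (p+1) / 2) * ((p-2)/p * G + 2/p * C1 ^ (p/2) + C2 * G)
        = (p * (p+1) / 2) * ((p-2)/p + C2) * G + (p+1) * C1 ^ (p/2) := by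
      field_simp
      ring
    linarith
  linarith [main1, main2]

end Aux

/-- Lyapunov estimate for `V_p(x) = (1+‖x‖²)^{p/2}` under a one-sided linear growth
condition on the drift and a linear growth condition on the diffusion coefficient. -/
theorem lyapunov_estimate (d m : ℕ) (T C1 C2 : ℝ) (hT : 0 ≤ T) (hC1 : 0 ≤ C1)
    (hC2 : 0 ≤ C2)
    (μ : ℝ → (Fin d → ℝ) → (Fin d → ℝ))
    (σ : ℝ → (Fin d → ℝ) → (Fin d → Fin m → ℝ))
    (V : ℝ → (Fin d → ℝ) → ℝ)
    (hμσ : ∀ t ∈ Set.Icc (0 : ℝ) T, ∀ x : Fin d → ℝ,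
      max (∑ i, x i * μ t x i) (∑ i, ∑ k, (σ t x i k) ^ 2)
        ≤ C1 + C2 * ∑ i, (x i) ^ 2)
    (hV : ∀ p : ℝ, ∀ x : Fin d → ℝ, V p x = (1 + ∑ i, (x i) ^ 2) ^ (p / 2)) :
    ∀ p ∈ Set.Ici (2 : ℝ),
      ContDiff ℝ (⊤ : ℕ∞) (V p) ∧
      ∀ t ∈ Set.Icc (0 : ℝ) T, ∀ x : Fin d → ℝ,
        (1 / 2) * (∑ k, ∑ i, ∑ j, σ t x i k * σ t x j k *
            fderiv ℝ (fun y => fderiv ℝ (V p) y (Pi.single j 1)) x (Pi.single i 1))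
          + ∑ i, μ t x i * fderiv ℝ (V p) x (Pi.single i 1)
        ≤ (p * (p + 1) / 2) * ((p - 2) / p + C2) * V p x + (p + 1) * C1 ^ (p / 2) := by
  intro p hp
  have hp2 : (2:ℝ) ≤ p := hp
  have hVfun : V p = fun y : Fin d → ℝ => (1 + ∑ i, y i ^ 2) ^ (p/2) :=
    funext fun y => hV p y
  refine ⟨by rw [hVfun]; exact W_contDiff d (p/2), ?_⟩
  intro t ht x
  have hmax := hμσ t ht x
  have hDr : ∑ i, x i * μ t x i ≤ C1 + C2 * ∑ i, x i ^ 2 :=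
    le_trans (le_max_left _ _) hmax
  have hSig : ∑ i, ∑ k, (σ t x i k) ^ 2 ≤ C1 + C2 * ∑ i, x i ^ 2 :=
    le_trans (le_max_right _ _) hmax
  rw [hVfun]
  simp only [W_second_apply d (p/2) x, W_fderiv_apply d (p/2) x]
  set A : ℝ := (1 + ∑ i, x i ^ 2) ^ (p/2 - 1) with hA
  set B : ℝ := (1 + ∑ i, x i ^ 2) ^ (p/2 - 2) with hB
  -- rewrite the trace sum
  have inner : ∀ k, (∑ i, ∑ j, σ t x i k * σ t x j k *
        (2 * (p/2) * A * (if i = j then 1 else 0) + 4 * (p/2) * (p/2 - 1) * B * x i * x j))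
      = p * A * (∑ i, (σ t x i k) ^ 2)
        + p * (p-2) * B * (∑ i, x i * σ t x i k) ^ 2 := by
    intro k
    have e0 : ∀ i j, σ t x i k * σ t x j k *
          (2 * (p/2) * A * (if i = j then 1 else 0) + 4 * (p/2) * (p/2 - 1) * B * x i * x j)
        = (if i = j then p * A * (σ t x i k) ^ 2 else 0)
          + (p * (p-2) * B * (x i * σ t x i k)) * (x j * σ t x j k) := by
      intro i j
      by_cases h : i = j
      · subst h; simp only [eq_self_iff_true, if_true]; ring
      · simp only [if_neg h]; ring
    have e1 : ∀ i, (∑ j, σ t x i k * σ t x j k *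
          (2 * (p/2) * A * (if i = j then 1 else 0) + 4 * (p/2) * (p/2 - 1) * B * x i * x j))
        = p * A * (σ t x i k) ^ 2
          + (p * (p-2) * B * (x i * σ t x i k)) * (∑ j, x j * σ t x j k) := by
      intro i
      simp only [e0]
      rw [Finset.sum_add_distrib, Finset.sum_ite_eq, ← Finset.mul_sum]
      simp
    simp only [e1]
    rw [Finset.sum_add_distrib, ← Finset.mul_sum, ← Finset.sum_mul, ← Finset.mul_sum, sq]
    ring
  simp only [inner]
  rw [Finset.sum_add_distrib, ← Finset.mul_sum, ← Finset.mul_sum]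
  -- rewrite the drift sum
  have hdr : (∑ i, μ t x i * (2 * (p/2) * x i * A)) = p * A * (∑ i, x i * μ t x i) := by
    rw [Finset.mul_sum]
    exact Finset.sum_congr rfl fun i _ => by ring
  rw [hdr]
  -- Cauchy–Schwarz
  have hS0 : (0:ℝ) ≤ ∑ i, x i ^ 2 := Finset.sum_nonneg fun i _ => sq_nonneg _
  have hSig0 : (0:ℝ) ≤ ∑ i, ∑ k, (σ t x i k) ^ 2 :=
    Finset.sum_nonneg fun i _ => Finset.sum_nonneg fun k _ => sq_nonneg _
  have hQQ0 : (0:ℝ) ≤ ∑ k, (∑ i, x i * σ t x i k) ^ 2 :=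
    Finset.sum_nonneg fun k _ => sq_nonneg _
  have hQQ : (∑ k, (∑ i, x i * σ t x i k) ^ 2)
      ≤ (∑ i, x i ^ 2) * (∑ i, ∑ k, (σ t x i k) ^ 2) := by
    calc (∑ k, (∑ i, x i * σ t x i k) ^ 2)
        ≤ ∑ k, (∑ i, x i ^ 2) * (∑ i, (σ t x i k) ^ 2) :=
          Finset.sum_le_sum fun k _ =>
            Finset.sum_mul_sq_le_sq_mul_sq Finset.univ x (fun i => σ t x i k)
      _ = (∑ i, x i ^ 2) * (∑ i, ∑ k, (σ t x i k) ^ 2) := by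
          rw [← Finset.mul_sum, Finset.sum_comm]
  have hswap : (∑ k, ∑ i, (σ t x i k) ^ 2) = ∑ i, ∑ k, (σ t x i k) ^ 2 := Finset.sum_comm
  rw [hswap]
  have := alg_ineq p C1 C2 (∑ i, x i ^ 2) (∑ i, ∑ k, (σ t x i k) ^ 2)
    (∑ i, x i * μ t x i) (∑ k, (∑ i, x i * σ t x i k) ^ 2)
    hp2 hC1 hC2 hS0 hSig0 hSig hDr hQQ0 hQQ
  rw [hA, hB]
  convert this using 2 <;> ring
end

section
/- Let α, β ≥ 0, M > 0, and let (ε_{n,q})_{n,q ∈ ℕ₀} ⊆ [0,∞] satisfy ε_{n,q} ≤ α/M^{n+q} + β·Σ_{k=0}^{n-1} ε_{k,q+1}/M^{n-(k+1)} for all n, q ∈ ℕ₀. Then for all n, q ∈ ℕ₀ it holds that ε_{n,q} ≤ α(1+β)^n / M^{n+q} < ∞. -/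
open scoped ENNReal NNReal BigOperators

/-!
Writing `r = M⁻¹`, each division by a power of `M` becomes multiplication by a power of `r`, and
the recursion makes sense in any canonically ordered commutative semiring. By strong induction on
`n`, every summand `ε k (q + 1) * r ^ (n - (k + 1))` is at most `α (1 + β) ^ k r ^ (n + q)`, and the
geometric sum `1 + β ∑_{k<n} (1 + β) ^ k = (1 + β) ^ n` closes the induction.
-/

open Finset in
theorem le_mul_one_add_pow_mul_pow_of_le {R : Type*} [CommSemiring R] [PartialOrder R]
    [CanonicallyOrderedAdd R] {ε : ℕ → ℕ → R} {a b r : R}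
    (h : ∀ n q, ε n q ≤ a * r ^ (n + q) + b * ∑ k ∈ range n, ε k (q + 1) * r ^ (n - (k + 1)))
    (n q : ℕ) : ε n q ≤ a * (1 + b) ^ n * r ^ (n + q) := by
  induction n using Nat.strong_induction_on generalizing q with
  | _ n ih =>
    have hterm : ∀ k ∈ range n,
        ε k (q + 1) * r ^ (n - (k + 1)) ≤ a * (1 + b) ^ k * r ^ (n + q) := by
      intro k hk
      have hexp : n + q = k + (q + 1) + (n - (k + 1)) := by grind
      rw [hexp, pow_add, ← mul_assoc]
      gcongr
      exact ih k (mem_range.mp hk) (q + 1)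
    calc ε n q ≤ a * r ^ (n + q) + b * ∑ k ∈ range n, ε k (q + 1) * r ^ (n - (k + 1)) := h n q
      _ ≤ a * r ^ (n + q) + b * ∑ k ∈ range n, a * (1 + b) ^ k * r ^ (n + q) := by
        gcongr a * r ^ (n + q) + b * ?_
        exact sum_le_sum hterm
      _ = a * ((∑ k ∈ range n, (b + 1) ^ k) * b + 1) * r ^ (n + q) := by
        simp only [← sum_mul, ← mul_sum, add_comm 1 b]
        ring
      _ = a * (1 + b) ^ n * r ^ (n + q) := by rw [geom_sum_mul_add, add_comm b]

/-- Geometric two-parameter time-discrete Gronwall inequality. -/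
theorem gronwall_geometric (α β : ℝ≥0) (M : ℝ) (hM : 0 < M) (ε : ℕ → ℕ → ℝ≥0∞)
    (h : ∀ n q : ℕ,
      ε n q ≤ (α : ℝ≥0∞) / ENNReal.ofReal M ^ (n + q)
        + (β : ℝ≥0∞) * ∑ k ∈ Finset.range n,
            ε k (q + 1) / ENNReal.ofReal M ^ (n - (k + 1))) :
    ∀ n q : ℕ,
      ε n q ≤ (α : ℝ≥0∞) * (1 + (β : ℝ≥0∞)) ^ n / ENNReal.ofReal M ^ (n + q) ∧
      (α : ℝ≥0∞) * (1 + (β : ℝ≥0∞)) ^ n / ENNReal.ofReal M ^ (n + q) < ⊤ := by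
  intro n q
  have hdiv : ∀ (x : ℝ≥0∞) (j : ℕ), x / ENNReal.ofReal M ^ j = x * (ENNReal.ofReal M)⁻¹ ^ j :=
    fun x j ↦ by rw [div_eq_mul_inv, ENNReal.inv_pow]
  simp only [hdiv] at h ⊢
  refine ⟨le_mul_one_add_pow_mul_pow_of_le h n q, ?_⟩
  have hr : (ENNReal.ofReal M)⁻¹ ≠ ⊤ := ENNReal.inv_ne_top.mpr (ENNReal.ofReal_pos.mpr hM).ne'
  finiteness
end

section
/- Let d ∈ ℕ, α ≥ 1, and let (C_{M,n})_{M,n ∈ ℤ} ⊆ [0,∞) satisfy C_{M,0} = 0 for all M ∈ ℕ and C_{M,n} ≤ α d M^n + Σ_{k=0}^{n-1} M^{n-k}·(αd + 1 + C_{M,k} + 𝟙_{ℕ}(k)·C_{M,k-1}) for all n, M ∈ ℕ. Then for all n, M ∈ ℕ it holds that C_{M,n} ≤ α d (5M)^n. -/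
open scoped BigOperators

/-- Computational cost estimate for full-history recursive MLP approximations. -/
theorem mlp_cost_estimate (d : ℕ) (hd : 1 ≤ d) (α : ℝ) (hα : 1 ≤ α)
    (C : ℤ → ℤ → ℝ)
    (hpos : ∀ M n : ℤ, 0 ≤ C M n)
    (h0 : ∀ M : ℕ, 1 ≤ M → C (M : ℤ) 0 = 0)
    (hrec : ∀ n M : ℕ, 1 ≤ n → 1 ≤ M →
      C (M : ℤ) (n : ℤ) ≤ α * d * (M : ℝ) ^ n
        + ∑ k ∈ Finset.range n, (M : ℝ) ^ (n - k) *
            (α * d + 1 + C (M : ℤ) (k : ℤ)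
              + (if 1 ≤ k then C (M : ℤ) ((k : ℤ) - 1) else 0))) :
    ∀ n M : ℕ, 1 ≤ n → 1 ≤ M → C (M : ℤ) (n : ℤ) ≤ α * d * (5 * M : ℝ) ^ n := by
  have hd' : (1:ℝ) ≤ (d:ℝ) := by exact_mod_cast hd
  have hαd : (1:ℝ) ≤ α * d := by nlinarith
  have hgeom : ∀ n : ℕ, ∑ k ∈ Finset.range n, (5:ℝ)^k = ((5:ℝ)^n - 1)/4 := by
    intro n
    rw [geom_sum_eq (by norm_num)]
    norm_num
  have hpow : ∀ n : ℕ, (4*(n:ℝ) + 1 : ℝ) ≤ 5^n := by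
    intro n
    induction n with
    | zero => norm_num
    | succ m ihm =>
      have h5 : (0:ℝ) ≤ 5^m := by positivity
      push_cast
      rw [pow_succ]
      push_cast at ihm
      nlinarith
  have key : ∀ n M : ℕ, 1 ≤ M → C (M:ℤ) (n:ℤ) ≤ α * d * (5*(M:ℝ):ℝ)^n := by
    intro n
    induction n using Nat.strong_induction_on with
    | _ n ih =>
      intro M hM
      rcases Nat.eq_zero_or_pos n with hn | hn
      · subst hn
        simp only [Nat.cast_zero, pow_zero, mul_one]
        rw [h0 M hM]
        linarith
      · have hM1 : (1:ℝ) ≤ (M:ℝ) := by exact_mod_cast hM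
        have hterm : ∀ k ∈ Finset.range n,
            (M:ℝ) ^ (n - k) * (α * d + 1 + C (M:ℤ) (k:ℤ)
              + (if 1 ≤ k then C (M:ℤ) ((k:ℤ) - 1) else 0))
            ≤ α*d*(M:ℝ)^n*(2 + 2*5^k) := by
          intro k hk
          rw [Finset.mem_range] at hk
          have hαd0 : (0:ℝ) ≤ α * d := by linarith
          have h1 : C (M:ℤ) (k:ℤ) ≤ α*d*(5^k*(M:ℝ)^k) := by
            have := ih k hk M hM
            rwa [mul_pow] at this
          have h2 : (if 1 ≤ k then C (M:ℤ) ((k:ℤ) - 1) else 0) ≤ α*d*(5^k*(M:ℝ)^k) := by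
            split
            · rename_i hk1
              have hcast : ((k:ℤ) - 1) = ((k-1 : ℕ) : ℤ) := by omega
              rw [hcast]
              have hih := ih (k-1) (by omega) M hM
              rw [mul_pow] at hih
              refine hih.trans ?_
              have e1 : (5:ℝ)^(k-1) ≤ 5^k := pow_le_pow_right₀ (by norm_num) (by omega)
              have e2 : (M:ℝ)^(k-1) ≤ (M:ℝ)^k := pow_le_pow_right₀ hM1 (by omega)
              have p2 : (0:ℝ) ≤ (M:ℝ)^(k-1) := by positivity
              exact mul_le_mul_of_nonneg_left (mul_le_mul e1 e2 p2 (by positivity)) hαd0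
            · have : (0:ℝ) ≤ α*d*(5^k*(M:ℝ)^k) := by positivity
              linarith
          have hmul : (M:ℝ)^(n-k) * (M:ℝ)^k = (M:ℝ)^n := by
            rw [← pow_add]
            congr 1
            omega
          have hle : (M:ℝ)^(n-k) ≤ (M:ℝ)^n := pow_le_pow_right₀ hM1 (Nat.sub_le n k)
          have hp : (0:ℝ) ≤ (M:ℝ)^(n-k) := by positivity
          have b1 : (M:ℝ)^(n-k) * (α*d+1) ≤ (M:ℝ)^n * (2*(α*d)) :=
            mul_le_mul hle (by linarith) (by linarith) (by positivity)
          have b2 : (M:ℝ)^(n-k) * C (M:ℤ) (k:ℤ) ≤ α*d*5^k*(M:ℝ)^n := by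
            calc (M:ℝ)^(n-k) * C (M:ℤ) (k:ℤ)
                ≤ (M:ℝ)^(n-k) * (α*d*(5^k*(M:ℝ)^k)) := mul_le_mul_of_nonneg_left h1 hp
              _ = α*d*5^k*((M:ℝ)^(n-k)*(M:ℝ)^k) := by ring
              _ = α*d*5^k*(M:ℝ)^n := by rw [hmul]
          have b3 : (M:ℝ)^(n-k) * (if 1 ≤ k then C (M:ℤ) ((k:ℤ) - 1) else 0)
              ≤ α*d*5^k*(M:ℝ)^n := by
            calc (M:ℝ)^(n-k) * (if 1 ≤ k then C (M:ℤ) ((k:ℤ) - 1) else 0)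
                ≤ (M:ℝ)^(n-k) * (α*d*(5^k*(M:ℝ)^k)) := mul_le_mul_of_nonneg_left h2 hp
              _ = α*d*5^k*((M:ℝ)^(n-k)*(M:ℝ)^k) := by ring
              _ = α*d*5^k*(M:ℝ)^n := by rw [hmul]
          calc (M:ℝ) ^ (n - k) * (α * d + 1 + C (M:ℤ) (k:ℤ)
                + (if 1 ≤ k then C (M:ℤ) ((k:ℤ) - 1) else 0))
              = (M:ℝ)^(n-k) * (α*d+1) + (M:ℝ)^(n-k) * C (M:ℤ) (k:ℤ)
                + (M:ℝ)^(n-k) * (if 1 ≤ k then C (M:ℤ) ((k:ℤ) - 1) else 0) := by ring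
            _ ≤ (M:ℝ)^n * (2*(α*d)) + α*d*5^k*(M:ℝ)^n + α*d*5^k*(M:ℝ)^n :=
                add_le_add (add_le_add b1 b2) b3
            _ = α*d*(M:ℝ)^n*(2 + 2*5^k) := by ring
        have hsum : ∑ k ∈ Finset.range n, (M:ℝ) ^ (n - k) * (α * d + 1 + C (M:ℤ) (k:ℤ)
              + (if 1 ≤ k then C (M:ℤ) ((k:ℤ) - 1) else 0))
            ≤ α*d*(M:ℝ)^n*(2*n + 2*((5^n - 1)/4)) := by
          calc _ ≤ ∑ k ∈ Finset.range n, α*d*(M:ℝ)^n*(2 + 2*5^k) :=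
                Finset.sum_le_sum hterm
            _ = α*d*(M:ℝ)^n*(2*n + 2*((5^n - 1)/4)) := by
                rw [← Finset.mul_sum]
                congr 1
                rw [Finset.sum_add_distrib, ← Finset.mul_sum, hgeom, Finset.sum_const,
                  Finset.card_range, nsmul_eq_mul]
                ring
        have hfin : C (M:ℤ) (n:ℤ) ≤ α*d*(M:ℝ)^n + α*d*(M:ℝ)^n*(2*n + 2*((5^n - 1)/4)) :=
          (hrec n M hn hM).trans (by linarith)
        refine hfin.trans ?_
        rw [mul_pow]
        have hX : (1:ℝ) + (2*n + 2*((5^n - 1)/4)) ≤ 5^n := by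
          have := hpow n
          linarith
        calc α*d*(M:ℝ)^n + α*d*(M:ℝ)^n*(2*n + 2*((5^n - 1)/4))
            = (α*d*(M:ℝ)^n) * (1 + (2*n + 2*((5^n - 1)/4))) := by ring
          _ ≤ (α*d*(M:ℝ)^n) * 5^n :=
              mul_le_mul_of_nonneg_left hX (by positivity)
          _ = α*d*((5:ℝ)^n*(M:ℝ)^n) := by ring
  intro n M _ hM
  exact key n M hM
end
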